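/- arXiv:1806.04974 — 3 statements merged into one kernel-verified Lean document; each statement's English description precedes it below -/
import Mathlib

section
/- Let F₁,...,Fₘ and G₁,...,Gₘ be k×k real symmetric positive definite matrices such that yᵀFᵢy ≥ yᵀGᵢy for every y ∈ ℝᵏ and every i, with the inequality strict for at least one i and one y. Let w₁,...,wₘ > 0 and set F = Σ wᵢFᵢ and G = Σ wᵢGᵢ. Then det F > det G. -/
/-!
Order symmetric matrices by `A ≤ B ↔ B - A` positive semidefinite. The hypotheses say exactly
that `Gᵢ ≤ Fᵢ` for all `i` and `Gᵢ < Fᵢ` for some `i`, so positive weights give `G < F` with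
`G` positive definite. Writing `G = S²` with `S = √G`, we get `F = S (1 + M) S` where
`M = S⁻¹ (F - G) S⁻¹` is positive semidefinite and nonzero; hence
`det F = det G · ∏ (1 + λᵢ(M)) > det G`.
-/

open Matrix Finset
open scoped MatrixOrder

namespace Matrix

variable {n : Type*} [Fintype n]

theorem le_of_forall_dotProduct_mulVec_le {A B : Matrix n n ℝ} (hA : A.IsHermitian)
    (hB : B.IsHermitian) (h : ∀ x, x ⬝ᵥ A *ᵥ x ≤ x ⬝ᵥ B *ᵥ x) : A ≤ B :=
  le_iff.mpr <| .of_dotProduct_mulVec_nonneg (hB.sub hA) fun x => by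
    simpa [sub_mulVec, dotProduct_sub] using h x

variable [DecidableEq n]

theorem IsHermitian.det_one_add {M : Matrix n n ℝ} (hM : M.IsHermitian) :
    (1 + M).det = ∏ i, (1 + hM.eigenvalues i) := by
  have h : 1 + M = cfc (fun x : ℝ => 1 + x) M := by
    rw [cfc_const_add 1 (fun x => x) M, cfc_id' ℝ M, algebraMap_eq_diagonal, Pi.algebraMap_def,
      Algebra.algebraMap_self, RingHom.id_apply, diagonal_one]
  rw [h, hM.cfc_eq]
  simp [IsHermitian.cfc, -Unitary.conjStarAlgAut_apply]

theorem PosSemidef.one_lt_det_one_add {M : Matrix n n ℝ} (hM : M.PosSemidef) (hM0 : M ≠ 0) :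
    1 < (1 + M).det := by
  obtain ⟨i₀, hi₀⟩ : ∃ i, hM.1.eigenvalues i ≠ 0 := by
    by_contra! h
    exact hM0 (hM.1.eigenvalues_eq_zero_iff.mp (funext h))
  rw [hM.1.det_one_add]
  refine (prod_const_one (s := univ)).symm.trans_lt <|
    prod_lt_prod (fun _ _ => one_pos) (fun i _ => ?_) ⟨i₀, mem_univ _, ?_⟩
  · linarith [hM.eigenvalues_nonneg i]
  · linarith [(hM.eigenvalues_nonneg i₀).lt_of_ne' hi₀]

theorem PosDef.det_lt_det_of_lt {A B : Matrix n n ℝ} (hA : A.PosDef) (hAB : A < B) :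
    A.det < B.det := by
  obtain ⟨hle, hne⟩ := lt_iff_le_and_ne.mp hAB
  set S := CFC.sqrt A
  have hSS : S * S = A := CFC.sqrt_mul_sqrt_self A hA.posSemidef.nonneg
  have hS : IsUnit S.det :=
    (isUnit_iff_isUnit_det S).mp ((CFC.isUnit_sqrt_iff A hA.posSemidef.nonneg).mpr hA.isUnit)
  have hSh : S.IsHermitian := (CFC.sqrt_nonneg A).posSemidef.isHermitian
  set M := S⁻¹ * (B - A) * S⁻¹
  have hB : B = S * (1 + M) * S := by
    simp only [M, mul_add, add_mul, mul_one, hSS, mul_assoc, nonsing_inv_mul _ hS,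
      mul_nonsing_inv_cancel_left _ _ hS]
    abel
  have hM : M.PosSemidef := by
    have h := (le_iff.mp hle).conjTranspose_mul_mul_same S⁻¹
    rwa [hSh.inv.eq] at h
  have hM0 : M ≠ 0 := fun h => hne (by rw [hB, h, add_zero, mul_one, hSS])
  calc A.det = A.det * 1 := (mul_one _).symm
    _ < A.det * (1 + M).det := mul_lt_mul_of_pos_left (hM.one_lt_det_one_add hM0) hA.det_pos
    _ = B.det := by rw [hB, det_mul, det_mul, ← hSS, det_mul]; ring

end Matrix

theorem det_weighted_sum_lt {k m : ℕ}
    (F G : Fin m → Matrix (Fin k) (Fin k) ℝ)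
    (hF : ∀ i, (F i).PosDef) (hG : ∀ i, (G i).PosDef)
    (hge : ∀ i (y : Fin k → ℝ), y ⬝ᵥ (G i).mulVec y ≤ y ⬝ᵥ (F i).mulVec y)
    (hstrict : ∃ i, ∃ y : Fin k → ℝ, y ⬝ᵥ (G i).mulVec y < y ⬝ᵥ (F i).mulVec y)
    (w : Fin m → ℝ) (hw : ∀ i, 0 < w i) :
    (∑ i, w i • G i).det < (∑ i, w i • F i).det := by
  obtain ⟨i₀, y, hy⟩ := hstrict
  have hGF (i) : G i ≤ F i :=
    le_of_forall_dotProduct_mulVec_le (hG i).isHermitian (hF i).isHermitian (hge i)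
  have hGF₀ : G i₀ < F i₀ := (hGF i₀).lt_of_ne fun h => (h ▸ hy).false
  refine PosDef.det_lt_det_of_lt (posDef_sum ⟨i₀, mem_univ _⟩ fun i _ => (hG i).smul (hw i)) ?_
  exact sum_lt_sum (fun i _ => smul_le_smul_of_nonneg_left (hGF i) (hw i).le)
    ⟨i₀, mem_univ _, smul_lt_smul_of_pos_left hGF₀ (hw i₀)⟩
end

section
/- Let λ < 0, let μ be a positive integrable rate function, and let N, N̄ be population functions bounded above with N̄(t) ≥ N(t) for all t and N̄(t) > N(t) on a subset of [x,∞) of positive measure. Then f(λ,μ,N̄,x) < f(λ,μ,N,x), where f(λ,μ,N,x) = ∫₀^∞ exp(2 s(0,x+z)λ) ℓ(x+z) exp(−∫₀^z ℓ(x+t)dt) dz with ℓ = 1/N and s(0,y) = ∫₀^y μ. If λ = 0, then f(λ,μ,N,x) = 1. -/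
/-!
Write `p = 1 / N (x + ·)` and `q = -2λ μ (x + ·) ≥ 0`. Since
`s(0, x + z) = s(0, x) + ∫₀^z μ(x + t) dt`, the mutation factor is itself a survival factor:
`f = e^{2λ s(0,x)} ∫₀^∞ p e^{-∫(p + q)}`. The primitive of a locally integrable function is
absolutely continuous, so by the fundamental theorem of calculus `(p + q) e^{-∫(p + q)}`
integrates to `1` once `∫(p + q) → ∞` (which `N ≤ B` guarantees), and
`f = e^{2λ s(0,x)} (1 - ∫₀^∞ q e^{-∫(p + q)})`. Enlarging `N` lowers `p`, hence lowers
`∫₀^z (p + q)` strictly for all large `z`; as `q > 0` this strictly increases the subtracted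
integral. For `λ = 0` the formula reads `f = ∫₀^∞ p e^{-∫ p} = 1`.
-/

open MeasureTheory

/-- The eigenvalue-wise contribution to the coalescent-averaged transition
matrix: `f(λ,μ,N,x) = ∫₀^∞ e^{2 s(0,x+z) λ} ℓ(x+z) e^{-∫₀^z ℓ(x+t) dt} dz`
with `ℓ = 1/N`. -/
noncomputable def coalF (lam : ℝ) (μ N : ℝ → ℝ) (x : ℝ) : ℝ :=
  ∫ z in Set.Ioi (0:ℝ),
    Real.exp (2 * (∫ t in (0:ℝ)..(x + z), μ t) * lam) * (1 / N (x + z)) *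
      Real.exp (-(∫ t in (0:ℝ)..z, 1 / N (x + t)))

open Set Filter Topology Function

open scoped NNReal

theorem LipschitzOnWith.comp_absolutelyContinuousOnInterval {f g : ℝ → ℝ} {K : ℝ≥0}
    {t : Set ℝ} {a b : ℝ} (hg : LipschitzOnWith K g t)
    (hf : AbsolutelyContinuousOnInterval f a b) (hft : MapsTo f (uIcc a b) t) :
    AbsolutelyContinuousOnInterval (g ∘ f) a b := by
  unfold AbsolutelyContinuousOnInterval at hf ⊢
  refine squeeze_zero' (Eventually.of_forall fun _ ↦ Finset.sum_nonneg fun _ _ ↦ dist_nonneg)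
    ?_ (by simpa using hf.const_mul (K : ℝ))
  rw [eventually_inf_principal]
  filter_upwards with E hE
  rw [Finset.mul_sum]
  gcongr with i hi
  exact hg.dist_le_mul _ (hft (hE.1 i hi).1) _ (hft (hE.1 i hi).2)

theorem LocallyLipschitz.comp_absolutelyContinuousOnInterval {f g : ℝ → ℝ} {a b : ℝ}
    (hg : LocallyLipschitz g) (hf : AbsolutelyContinuousOnInterval f a b) :
    AbsolutelyContinuousOnInterval (g ∘ f) a b := by
  obtain ⟨K, hK⟩ := hg.locallyLipschitzOn.exists_lipschitzOnWith_of_compact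
    (isCompact_uIcc.image_of_continuousOn hf.continuousOn)
  exact hK.comp_absolutelyContinuousOnInterval hf (mapsTo_image f _)

theorem integral_mul_exp_neg_primitive {s : ℝ → ℝ} {b : ℝ}
    (hs : IntervalIntegrable s volume 0 b) :
    ∫ z in (0:ℝ)..b, s z * Real.exp (-∫ t in (0:ℝ)..z, s t) =
      1 - Real.exp (-∫ t in (0:ℝ)..b, s t) := by
  set S : ℝ → ℝ := fun z ↦ ∫ t in (0:ℝ)..z, s t
  have hE : AbsolutelyContinuousOnInterval (fun z ↦ Real.exp (-S z)) 0 b :=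
    (Real.contDiff_exp.comp contDiff_neg).locallyLipschitz.comp_absolutelyContinuousOnInterval
      (hs.absolutelyContinuousOnInterval_intervalIntegral left_mem_uIcc)
  have hderiv : ∀ᵐ z, z ∈ uIoc 0 b →
      s z * Real.exp (-S z) = -deriv (fun z ↦ Real.exp (-S z)) z := by
    filter_upwards [hs.ae_hasDerivAt_integral] with z hz hzI
    have : HasDerivAt S (s z) z := hz (uIoc_subset_uIcc hzI) 0 left_mem_uIcc
    rw [this.fun_neg.exp.deriv]
    ring
  rw [intervalIntegral.integral_congr_ae hderiv, intervalIntegral.integral_neg,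
    hE.integral_deriv_eq_sub]
  simp [S]

theorem intervalIntegrable_comp_add_left_of_forall {f : ℝ → ℝ}
    (hf : ∀ a b, IntervalIntegrable f volume a b) (c a b : ℝ) :
    IntervalIntegrable (fun t ↦ f (c + t)) volume a b := by
  simpa using (hf (c + a) (c + b)).comp_add_left c

theorem tendsto_primitive_atTop_of_const_le {s : ℝ → ℝ} {c : ℝ}
    (hs : ∀ b, IntervalIntegrable s volume 0 b) (hc : 0 < c) (hcs : ∀ t, c ≤ s t) :
    Tendsto (fun z ↦ ∫ t in (0:ℝ)..z, s t) atTop atTop := by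
  refine tendsto_atTop_mono' _ ?_ (tendsto_id.const_mul_atTop hc)
  filter_upwards [eventually_ge_atTop 0] with z hz
  simpa [mul_comm] using
    intervalIntegral.integral_mono_on hz intervalIntegrable_const (hs z) fun t _ ↦ hcs t

theorem integrableOn_Ioi_mul_exp_neg_primitive {q s : ℝ → ℝ}
    (hq : ∀ a b, IntervalIntegrable q volume a b) (hs : ∀ a b, IntervalIntegrable s volume a b)
    (hq0 : ∀ t, 0 ≤ q t) (hqs : ∀ t, q t ≤ s t) :
    IntegrableOn (fun z ↦ q z * Real.exp (-∫ t in (0:ℝ)..z, s t)) (Ioi 0) := by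
  have hexp : Continuous fun z ↦ Real.exp (-∫ t in (0:ℝ)..z, s t) :=
    (intervalIntegral.continuous_primitive hs 0).neg.rexp
  refine integrableOn_Ioi_of_intervalIntegral_norm_bounded 1 0
    (fun b ↦ ((hq 0 b).mul_continuousOn hexp.continuousOn).1) tendsto_id ?_
  filter_upwards [eventually_ge_atTop 0] with b hb
  calc ∫ z in (0:ℝ)..b, ‖q z * Real.exp (-∫ t in (0:ℝ)..z, s t)‖
      = ∫ z in (0:ℝ)..b, q z * Real.exp (-∫ t in (0:ℝ)..z, s t) := by
        simp only [Real.norm_eq_abs, abs_of_nonneg (mul_nonneg (hq0 _) (Real.exp_pos _).le)]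
    _ ≤ ∫ z in (0:ℝ)..b, s z * Real.exp (-∫ t in (0:ℝ)..z, s t) :=
        intervalIntegral.integral_mono_on hb ((hq 0 b).mul_continuousOn hexp.continuousOn)
          ((hs 0 b).mul_continuousOn hexp.continuousOn)
          fun z _ ↦ mul_le_mul_of_nonneg_right (hqs z) (Real.exp_pos _).le
    _ ≤ 1 := by
        rw [integral_mul_exp_neg_primitive (hs 0 b)]
        linarith [Real.exp_pos (-∫ t in (0:ℝ)..b, s t)]

theorem integral_Ioi_mul_exp_neg_primitive {s : ℝ → ℝ}
    (hs : ∀ a b, IntervalIntegrable s volume a b) (hs0 : ∀ t, 0 ≤ s t)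
    (htop : Tendsto (fun z ↦ ∫ t in (0:ℝ)..z, s t) atTop atTop) :
    ∫ z in Ioi 0, s z * Real.exp (-∫ t in (0:ℝ)..z, s t) = 1 := by
  have hlim : Tendsto (fun b ↦ ∫ z in (0:ℝ)..b, s z * Real.exp (-∫ t in (0:ℝ)..z, s t))
      atTop (𝓝 1) := by
    simp_rw [integral_mul_exp_neg_primitive (hs 0 _)]
    simpa using (Real.tendsto_exp_neg_atTop_nhds_zero.comp htop).const_sub 1
  exact tendsto_nhds_unique (intervalIntegral_tendsto_integral_Ioi 0
    (integrableOn_Ioi_mul_exp_neg_primitive hs hs hs0 fun _ ↦ le_rfl) tendsto_id) hlim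

theorem integral_Ioi_mul_exp_neg_primitive_add_eq_one_sub {p q : ℝ → ℝ}
    (hp : ∀ a b, IntervalIntegrable p volume a b) (hq : ∀ a b, IntervalIntegrable q volume a b)
    (hp0 : ∀ t, 0 ≤ p t) (hq0 : ∀ t, 0 ≤ q t)
    (htop : Tendsto (fun z ↦ ∫ t in (0:ℝ)..z, (p t + q t)) atTop atTop) :
    ∫ z in Ioi 0, p z * Real.exp (-∫ t in (0:ℝ)..z, (p t + q t)) =
      1 - ∫ z in Ioi 0, q z * Real.exp (-∫ t in (0:ℝ)..z, (p t + q t)) := by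
  have hpq : ∀ a b, IntervalIntegrable (fun t ↦ p t + q t) volume a b :=
    fun a b ↦ (hp a b).add (hq a b)
  rw [← integral_Ioi_mul_exp_neg_primitive hpq (fun t ↦ add_nonneg (hp0 t) (hq0 t)) htop,
    ← integral_sub (integrableOn_Ioi_mul_exp_neg_primitive hpq hpq
      (fun t ↦ add_nonneg (hp0 t) (hq0 t)) fun _ ↦ le_rfl)
      (integrableOn_Ioi_mul_exp_neg_primitive hq hpq hq0 fun t ↦ le_add_of_nonneg_left (hp0 t))]
  congr 1 with z
  ring

theorem integral_Ioi_mul_exp_neg_lt {q A B : ℝ → ℝ} {z₀ : ℝ}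
    (hA : IntegrableOn (fun z ↦ q z * Real.exp (-A z)) (Ioi 0))
    (hB : IntegrableOn (fun z ↦ q z * Real.exp (-B z)) (Ioi 0))
    (hq : ∀ z > 0, 0 < q z) (hAB : ∀ z > 0, A z ≤ B z) (hlt : ∀ z > z₀, A z < B z) :
    ∫ z in Ioi 0, q z * Real.exp (-B z) < ∫ z in Ioi 0, q z * Real.exp (-A z) := by
  rw [← sub_pos, ← integral_sub hA hB, setIntegral_pos_iff_support_of_nonneg_ae
    (f := fun z ↦ q z * Real.exp (-A z) - q z * Real.exp (-B z)) ?_ (hA.sub hB)]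
  · have hsupp : Ioi (max z₀ 0) ⊆
        support (fun z ↦ q z * Real.exp (-A z) - q z * Real.exp (-B z)) ∩ Ioi 0 := by
      intro z hz
      have hz₀ : z₀ < z := (le_max_left _ _).trans_lt hz
      have hz0 : 0 < z := (le_max_right _ _).trans_lt hz
      refine ⟨(sub_pos.2 ?_).ne', hz0⟩
      exact mul_lt_mul_of_pos_left (Real.exp_lt_exp.2 (neg_lt_neg (hlt z hz₀))) (hq z hz0)
    exact (Measure.measure_Ioi_pos _ _).trans_le (measure_mono hsupp)
  · refine (ae_restrict_iff' measurableSet_Ioi).2 (ae_of_all _ fun z (hz : 0 < z) ↦ ?_)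
    exact sub_nonneg.2 (mul_le_mul_of_nonneg_left
      (Real.exp_le_exp.2 (neg_le_neg (hAB z hz))) (hq z hz).le)

theorem integral_Ioi_mul_exp_neg_primitive_add_lt {h h' q : ℝ → ℝ} {z₀ : ℝ}
    (hh : ∀ a b, IntervalIntegrable h volume a b)
    (hh' : ∀ a b, IntervalIntegrable h' volume a b)
    (hq : ∀ a b, IntervalIntegrable q volume a b)
    (hh'0 : ∀ t, 0 ≤ h' t) (hle : ∀ t, h' t ≤ h t) (hq0 : ∀ t, 0 < q t)
    (hz₀ : 0 < ∫ t in (0:ℝ)..z₀, (h t - h' t)) :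
    ∫ z in Ioi 0, q z * Real.exp (-∫ t in (0:ℝ)..z, (h t + q t)) <
      ∫ z in Ioi 0, q z * Real.exp (-∫ t in (0:ℝ)..z, (h' t + q t)) := by
  have hgap : ∀ a b, IntervalIntegrable (fun t ↦ h t - h' t) volume a b :=
    fun a b ↦ (hh a b).sub (hh' a b)
  have hgap0 : ∀ t, 0 ≤ h t - h' t := fun t ↦ sub_nonneg.2 (hle t)
  have hdiff : ∀ z, (∫ t in (0:ℝ)..z, (h t + q t)) - ∫ t in (0:ℝ)..z, (h' t + q t) =
      ∫ t in (0:ℝ)..z, (h t - h' t) := fun z ↦ by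
    rw [← intervalIntegral.integral_sub ((hh 0 z).add (hq 0 z)) ((hh' 0 z).add (hq 0 z))]
    congr 1 with t
    ring
  have hintegrable : ∀ k, (∀ t, 0 ≤ k t) → (∀ a b, IntervalIntegrable k volume a b) →
      IntegrableOn (fun z ↦ q z * Real.exp (-∫ t in (0:ℝ)..z, (k t + q t))) (Ioi 0) :=
    fun k hk0 hk ↦ integrableOn_Ioi_mul_exp_neg_primitive hq (fun a b ↦ (hk a b).add (hq a b))
      (fun t ↦ (hq0 t).le) fun t ↦ le_add_of_nonneg_left (hk0 t)
  refine integral_Ioi_mul_exp_neg_lt (z₀ := z₀) (hintegrable h' hh'0 hh')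
    (hintegrable h (fun t ↦ (hh'0 t).trans (hle t)) hh) (fun z _ ↦ hq0 z)
    (fun z hz ↦ ?_) (fun z hz ↦ ?_)
  · have : 0 ≤ ∫ t in (0:ℝ)..z, (h t - h' t) :=
      intervalIntegral.integral_nonneg hz.le fun t _ ↦ hgap0 t
    linarith [hdiff z]
  · have hsplit := intervalIntegral.integral_interval_sub_left (hgap 0 z) (hgap 0 z₀)
    have : 0 ≤ ∫ t in z₀..z, (h t - h' t) :=
      intervalIntegral.integral_nonneg hz.le fun t _ ↦ hgap0 t
    linarith [hdiff z]

theorem exists_intervalIntegral_pos_of_volume_pos {g : ℝ → ℝ} {a : ℝ}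
    (hg : ∀ b, IntervalIntegrable g volume a b) (hg0 : ∀ t, 0 ≤ g t)
    (hpos : 0 < volume {t | a ≤ t ∧ 0 < g t}) :
    ∃ b, 0 < ∫ t in a..b, g t := by
  by_contra! hle
  have hnull : ∀ n : ℕ, volume (support g ∩ Ioc a (a + n + 1)) = 0 := fun n ↦ by
    by_contra hne
    exact (hle _).not_gt ((intervalIntegral.integral_pos_iff_support_of_nonneg_ae
      (ae_of_all _ hg0) (hg _)).2 ⟨by linarith, pos_iff_ne_zero.2 hne⟩)
  refine hpos.ne' (measure_mono_null ?_
    (measure_union_null (measure_singleton a) (measure_iUnion_null hnull)))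
  rintro t ⟨hat, hgt⟩
  rcases hat.eq_or_lt with rfl | hat
  · exact Or.inl rfl
  · obtain ⟨n, hn⟩ := exists_nat_ge (t - a)
    exact Or.inr (mem_iUnion.2 ⟨n, hgt.ne', hat, by linarith⟩)

theorem coalF_eq (lam x : ℝ) {μ N : ℝ → ℝ}
    (hμ : ∀ a b, IntervalIntegrable μ volume a b)
    (hN : ∀ a b, IntervalIntegrable (fun t ↦ 1 / N t) volume a b) :
    coalF lam μ N x = Real.exp (2 * (∫ t in (0:ℝ)..x, μ t) * lam) *
      ∫ z in Ioi 0, 1 / N (x + z) *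
        Real.exp (-∫ t in (0:ℝ)..z, (1 / N (x + t) + -(2 * lam) * μ (x + t))) := by
  rw [coalF, ← integral_const_mul]
  congr 1 with z
  have hμsplit : ∫ t in (0:ℝ)..(x + z), μ t =
      (∫ t in (0:ℝ)..x, μ t) + ∫ t in (0:ℝ)..z, μ (x + t) := by
    rw [intervalIntegral.integral_comp_add_left μ x, add_zero,
      intervalIntegral.integral_add_adjacent_intervals (hμ 0 x) (hμ x (x + z))]
  rw [intervalIntegral.integral_add (intervalIntegrable_comp_add_left_of_forall hN x 0 z)
    ((intervalIntegrable_comp_add_left_of_forall hμ x 0 z).const_mul _),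
    intervalIntegral.integral_const_mul, hμsplit]
  rw [show ∀ P M : ℝ, -(P + -(2 * lam) * M) = 2 * M * lam + -P by intros; ring,
    show ∀ M A : ℝ, 2 * (A + M) * lam = 2 * A * lam + 2 * M * lam by intros; ring,
    Real.exp_add, Real.exp_add]
  ring

theorem coalF_eq_one_sub {lam : ℝ} (hlam : lam ≤ 0) (x : ℝ) {μ N : ℝ → ℝ} {B : ℝ}
    (hμ0 : ∀ t, 0 ≤ μ t) (hμ : ∀ a b, IntervalIntegrable μ volume a b)
    (hN0 : ∀ t, 0 < N t) (hNB : ∀ t, N t ≤ B)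
    (hN : ∀ a b, IntervalIntegrable (fun t ↦ 1 / N t) volume a b) :
    coalF lam μ N x = Real.exp (2 * (∫ t in (0:ℝ)..x, μ t) * lam) *
      (1 - ∫ z in Ioi 0, -(2 * lam) * μ (x + z) *
        Real.exp (-∫ t in (0:ℝ)..z, (1 / N (x + t) + -(2 * lam) * μ (x + t)))) := by
  have hp := intervalIntegrable_comp_add_left_of_forall hN x
  have hq := fun a b ↦
    (intervalIntegrable_comp_add_left_of_forall hμ x a b).const_mul (-(2 * lam))
  have hp0 : ∀ t, 0 ≤ 1 / N (x + t) := fun t ↦ one_div_nonneg.2 (hN0 _).le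
  have hq0 : ∀ t, 0 ≤ -(2 * lam) * μ (x + t) := fun t ↦ mul_nonneg (by linarith) (hμ0 _)
  have hB : 0 < B := (hN0 0).trans_le (hNB 0)
  rw [coalF_eq lam x hμ hN, integral_Ioi_mul_exp_neg_primitive_add_eq_one_sub hp hq hp0 hq0
    (tendsto_primitive_atTop_of_const_le (fun b ↦ (hp 0 b).add (hq 0 b)) (one_div_pos.2 hB)
      fun t ↦ (one_div_le_one_div_of_le (hN0 _) (hNB _)).trans (le_add_of_nonneg_right (hq0 t)))]

theorem coalF_zero (μ : ℝ → ℝ) (x : ℝ) {N : ℝ → ℝ} {B : ℝ} (hN0 : ∀ t, 0 < N t)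
    (hNB : ∀ t, N t ≤ B) (hN : ∀ a b, IntervalIntegrable (fun t ↦ 1 / N t) volume a b) :
    coalF 0 μ N x = 1 := by
  have hp := intervalIntegrable_comp_add_left_of_forall hN x
  simp only [coalF, mul_zero, Real.exp_zero, one_mul]
  exact integral_Ioi_mul_exp_neg_primitive hp (fun t ↦ one_div_nonneg.2 (hN0 _).le)
    (tendsto_primitive_atTop_of_const_le (hp 0) (one_div_pos.2 ((hN0 0).trans_le (hNB 0)))
      fun t ↦ one_div_le_one_div_of_le (hN0 _) (hNB _))

theorem coalF_population_comparison_general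
    (lam : ℝ) (x : ℝ)
    (μ : ℝ → ℝ) (hμpos : ∀ t, 0 < μ t)
    (hμint : ∀ a b : ℝ, IntervalIntegrable μ volume a b)
    (N Nbar : ℝ → ℝ) (B : ℝ)
    (hNpos : ∀ t, 0 < N t) (hNB : ∀ t, N t ≤ B)
    (hNbarpos : ∀ t, 0 < Nbar t) (hNbarB : ∀ t, Nbar t ≤ B)
    (hNint : ∀ a b : ℝ, IntervalIntegrable (fun t => 1 / N t) volume a b)
    (hNbarint : ∀ a b : ℝ, IntervalIntegrable (fun t => 1 / Nbar t) volume a b)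
    (hge : ∀ t, N t ≤ Nbar t)
    (hpos : 0 < volume {t : ℝ | x ≤ t ∧ N t < Nbar t}) :
    (lam < 0 → coalF lam μ Nbar x < coalF lam μ N x) ∧
    (lam = 0 → coalF lam μ N x = 1) := by
  refine ⟨fun hlam ↦ ?_, fun hlam ↦ hlam ▸ coalF_zero μ x hNpos hNB hNint⟩
  have hμ0 : ∀ t, 0 ≤ μ t := fun t ↦ (hμpos t).le
  rw [coalF_eq_one_sub hlam.le x hμ0 hμint hNbarpos hNbarB hNbarint,
    coalF_eq_one_sub hlam.le x hμ0 hμint hNpos hNB hNint]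
  refine mul_lt_mul_of_pos_left (sub_lt_sub_left ?_ 1) (Real.exp_pos _)
  obtain ⟨b, hb⟩ :=
    exists_intervalIntegral_pos_of_volume_pos (g := fun t ↦ 1 / N t - 1 / Nbar t)
      (fun b ↦ (hNint x b).sub (hNbarint x b))
      (fun t ↦ sub_nonneg.2 (one_div_le_one_div_of_le (hNpos t) (hge t)))
      (hpos.trans_le (measure_mono fun t ⟨hxt, hlt⟩ ↦
        ⟨hxt, sub_pos.2 (one_div_lt_one_div_of_lt (hNpos t) hlt)⟩))
  have hgap : 0 < ∫ t in (0:ℝ)..(b - x), (1 / N (x + t) - 1 / Nbar (x + t)) := by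
    rwa [intervalIntegral.integral_comp_add_left (fun t ↦ 1 / N t - 1 / Nbar t) x, add_zero,
      add_sub_cancel]
  exact integral_Ioi_mul_exp_neg_primitive_add_lt
    (intervalIntegrable_comp_add_left_of_forall hNint x)
    (intervalIntegrable_comp_add_left_of_forall hNbarint x)
    (fun a b ↦ (intervalIntegrable_comp_add_left_of_forall hμint x a b).const_mul _)
    (fun t ↦ one_div_nonneg.2 (hNbarpos _).le)
    (fun t ↦ one_div_le_one_div_of_le (hNpos _) (hge _))
    (fun t ↦ mul_pos (by linarith) (hμpos _)) hgap

theorem coalF_population_comparison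
    (lam : ℝ) (hlam : lam ≤ 0) (x : ℝ) (hx : 0 ≤ x)
    (μ : ℝ → ℝ) (hμpos : ∀ t, 0 < μ t)
    (hμint : ∀ a b : ℝ, IntervalIntegrable μ volume a b)
    (N Nbar : ℝ → ℝ) (B : ℝ)
    (hNpos : ∀ t, 0 < N t) (hNB : ∀ t, N t ≤ B)
    (hNbarpos : ∀ t, 0 < Nbar t) (hNbarB : ∀ t, Nbar t ≤ B)
    (hNint : ∀ a b : ℝ, IntervalIntegrable (fun t => 1 / N t) volume a b)
    (hNbarint : ∀ a b : ℝ, IntervalIntegrable (fun t => 1 / Nbar t) volume a b)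
    (hge : ∀ t, N t ≤ Nbar t)
    (hpos : 0 < volume {t : ℝ | x ≤ t ∧ N t < Nbar t}) :
    (lam < 0 → coalF lam μ Nbar x < coalF lam μ N x) ∧
    (lam = 0 → coalF lam μ N x = 1) :=
  coalF_population_comparison_general lam x μ hμpos hμint N Nbar B hNpos hNB hNbarpos hNbarB hNint
    hNbarint hge hpos
end

section
/- Let λ < 0, μ a positive integrable rate function, and N a population function bounded above with 1/N locally integrable. Then x ↦ f(λ,μ,N,x) = ∫₀^∞ exp(2 s(0,x+z)λ) ℓ(x+z) exp(−∫₀^z ℓ(x+t)dt) dz is a strictly decreasing function of x ≥ 0. -/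
/-!
Write `L(v) = ∫₀^v ℓ` and `w(v) = exp(2 s(0,v) λ)`. The substitution `v = x + z` gives
`f(x) = e^{L(x)} ∫_x^∞ w(v) ℓ(v) e^{-L(v)} dv`, and since `L` is absolutely continuous,
`∫_a^b ℓ e^{-L} = e^{-L(a)} - e^{-L(b)}`. Splitting the integral at `y > x`,
`f(x) = e^{L(x)} ∫_x^y w ℓ e^{-L} + r f(y)` with `r = e^{L(x) - L(y)} ≤ 1`. The weight `w` is
strictly decreasing, so it exceeds `w(y)` on `(x, y)`, which makes the first term larger than
`(1 - r) w(y)`, and `f(y) ≤ w(y)` because `f(y)` averages `w` over `[y, ∞)` against a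
sub-probability density. Hence `f(x) > (1 - r) w(y) + r f(y) ≥ f(y)`.
-/

open MeasureTheory

open Set Filter
open scoped NNReal

theorem LipschitzOnWith.comp_absolutelyContinuousOnInterval_s11 {X Y : Type*}
    [PseudoMetricSpace X] [PseudoMetricSpace Y] {φ : X → Y} {f : ℝ → X} {K : ℝ≥0} {s : Set X}
    {a b : ℝ} (hφ : LipschitzOnWith K φ s) (hf : AbsolutelyContinuousOnInterval f a b)
    (hfs : MapsTo f (uIcc a b) s) : AbsolutelyContinuousOnInterval (φ ∘ f) a b := by
  have hK := Tendsto.const_mul (K : ℝ) hf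
  rw [mul_zero] at hK
  refine squeeze_zero' (Eventually.of_forall fun E => Finset.sum_nonneg fun i _ => dist_nonneg)
    ?_ hK
  refine eventually_inf_principal.mpr (Eventually.of_forall fun E hE => ?_)
  rw [Finset.mul_sum]
  exact Finset.sum_le_sum fun i hi => hφ.dist_le_mul _ (hfs (hE.1 i hi).1) _ (hfs (hE.1 i hi).2)

theorem Real.lipschitzOnWith_exp_Iic (C : ℝ) :
    LipschitzOnWith (Real.toNNReal (Real.exp C)) Real.exp (Iic C) :=
  (convex_Iic C).lipschitzOnWith_of_nnnorm_deriv_le (fun x _ => Real.differentiableAt_exp)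
    fun x hx => by
      rw [Real.deriv_exp, ← NNReal.coe_le_coe, coe_nnnorm, Real.norm_eq_abs,
        abs_of_pos (Real.exp_pos x), Real.coe_toNNReal _ (Real.exp_pos C).le]
      exact Real.exp_le_exp.mpr hx

theorem AbsolutelyContinuousOnInterval.integral_exp_mul_deriv {g : ℝ → ℝ} {a b : ℝ}
    (hg : AbsolutelyContinuousOnInterval g a b) :
    ∫ x in a..b, Real.exp (g x) * deriv g x = Real.exp (g b) - Real.exp (g a) := by
  obtain ⟨C, hC⟩ := hg.exists_bound
  have hexp : AbsolutelyContinuousOnInterval (fun x => Real.exp (g x)) a b :=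
    (Real.lipschitzOnWith_exp_Iic C).comp_absolutelyContinuousOnInterval_s11 hg
      fun x hx => (le_abs_self _).trans (hC x hx)
  rw [← hexp.integral_deriv_eq_sub]
  refine intervalIntegral.integral_congr_ae ?_
  filter_upwards [hg.ae_differentiableAt] with x hx hxab
  exact ((hx (uIoc_subset_uIcc hxab)).hasDerivAt.exp.deriv).symm

theorem strictMono_intervalIntegral_of_pos {f : ℝ → ℝ}
    (hf : ∀ a b : ℝ, IntervalIntegrable f volume a b) (hpos : ∀ t, 0 < f t) (c : ℝ) :
    StrictMono fun x => ∫ t in c..x, f t := by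
  intro u v huv
  rw [← sub_pos, intervalIntegral.integral_interval_sub_left (hf c v) (hf c u)]
  exact intervalIntegral.intervalIntegral_pos_of_pos (hf u v) hpos huv

noncomputable def arrivalDensity (ℓ : ℝ → ℝ) (v : ℝ) : ℝ :=
  ℓ v * Real.exp (-∫ t in (0:ℝ)..v, ℓ t)

section ArrivalDensity

variable {ℓ : ℝ → ℝ}

theorem integral_arrivalDensity (hℓ : ∀ a b : ℝ, IntervalIntegrable ℓ volume a b) (a b : ℝ) :
    ∫ v in a..b, arrivalDensity ℓ v =
      Real.exp (-∫ t in (0:ℝ)..a, ℓ t) - Real.exp (-∫ t in (0:ℝ)..b, ℓ t) := by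
  set c := a ⊓ b ⊓ 0
  set d := a ⊔ b ⊔ 0
  have hcd : c ≤ d := by simp [c, d]
  have hsub : uIcc a b ⊆ uIcc c d := by
    rw [uIcc, uIcc_of_le hcd]
    exact Icc_subset_Icc (by simp [c]) (by simp [d])
  have h0 : (0:ℝ) ∈ uIcc c d := by
    rw [uIcc_of_le hcd]
    exact ⟨by simp [c], by simp [d]⟩
  have hac : AbsolutelyContinuousOnInterval (fun x => -∫ t in (0:ℝ)..x, ℓ t) a b :=
    (((hℓ c d).absolutelyContinuousOnInterval_intervalIntegral h0).mono hsub).neg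
  have hderiv : ∀ᵐ x, x ∈ uIoc a b → deriv (fun x => -∫ t in (0:ℝ)..x, ℓ t) x = -ℓ x := by
    filter_upwards [(hℓ c d).ae_hasDerivAt_integral] with x hx hxab
    exact ((hx (hsub (uIoc_subset_uIcc hxab)) 0 h0).neg).deriv
  rw [← neg_sub, ← hac.integral_exp_mul_deriv, ← intervalIntegral.integral_neg]
  refine intervalIntegral.integral_congr_ae ?_
  filter_upwards [hderiv] with x hx hxab
  rw [arrivalDensity, hx hxab]
  ring

theorem intervalIntegrable_arrivalDensity (hℓ : ∀ a b : ℝ, IntervalIntegrable ℓ volume a b)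
    (a b : ℝ) : IntervalIntegrable (arrivalDensity ℓ) volume a b :=
  (hℓ a b).mul_continuousOn
    (Real.continuous_exp.comp (intervalIntegral.continuous_primitive hℓ 0).neg).continuousOn

theorem arrivalDensity_nonneg (hℓ0 : ∀ t, 0 ≤ ℓ t) (v : ℝ) : 0 ≤ arrivalDensity ℓ v :=
  mul_nonneg (hℓ0 v) (Real.exp_pos _).le

theorem intervalIntegral_arrivalDensity_le (hℓ : ∀ a b : ℝ, IntervalIntegrable ℓ volume a b)
    (a b : ℝ) : ∫ v in a..b, arrivalDensity ℓ v ≤ Real.exp (-∫ t in (0:ℝ)..a, ℓ t) := by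
  rw [integral_arrivalDensity hℓ]
  linarith [Real.exp_pos (-∫ t in (0:ℝ)..b, ℓ t)]

theorem integrableOn_Ioi_arrivalDensity (hℓ : ∀ a b : ℝ, IntervalIntegrable ℓ volume a b)
    (hℓ0 : ∀ t, 0 ≤ ℓ t) (a : ℝ) : IntegrableOn (arrivalDensity ℓ) (Ioi a) := by
  refine integrableOn_Ioi_of_intervalIntegral_norm_bounded (Real.exp (-∫ t in (0:ℝ)..a, ℓ t)) a
    (fun b => (intervalIntegrable_arrivalDensity hℓ a b).1) tendsto_id (Eventually.of_forall ?_)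
  intro b
  simp only [Real.norm_eq_abs, abs_of_nonneg (arrivalDensity_nonneg hℓ0 _)]
  exact intervalIntegral_arrivalDensity_le hℓ a b

theorem integral_Ioi_arrivalDensity_le (hℓ : ∀ a b : ℝ, IntervalIntegrable ℓ volume a b)
    (hℓ0 : ∀ t, 0 ≤ ℓ t) (a : ℝ) :
    ∫ v in Ioi a, arrivalDensity ℓ v ≤ Real.exp (-∫ t in (0:ℝ)..a, ℓ t) :=
  le_of_tendsto (intervalIntegral_tendsto_integral_Ioi a
      (integrableOn_Ioi_arrivalDensity hℓ hℓ0 a) tendsto_id)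
    (Eventually.of_forall (intervalIntegral_arrivalDensity_le hℓ a))

end ArrivalDensity

theorem integral_Ioi_comp_add_left {E : Type*} [NormedAddCommGroup E] [NormedSpace ℝ E]
    (f : ℝ → E) (c a : ℝ) : ∫ z in Ioi a, f (c + z) = ∫ v in Ioi (c + a), f v := by
  have h := (measurePreserving_add_left volume c).setIntegral_preimage_emb
    (MeasurableEquiv.addLeft c).measurableEmbedding f (Ioi (c + a))
  rwa [preimage_const_add_Ioi, add_sub_cancel_left] at h

noncomputable def survivalAverage (w ℓ : ℝ → ℝ) (x : ℝ) : ℝ :=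
  ∫ z in Ioi (0:ℝ), w (x + z) * ℓ (x + z) * Real.exp (-∫ t in (0:ℝ)..z, ℓ (x + t))

section SurvivalAverage

variable {w ℓ : ℝ → ℝ}

theorem survivalAverage_eq (hℓ : ∀ a b : ℝ, IntervalIntegrable ℓ volume a b) (x : ℝ) :
    survivalAverage w ℓ x =
      Real.exp (∫ t in (0:ℝ)..x, ℓ t) * ∫ v in Ioi x, w v * arrivalDensity ℓ v := by
  have hshift (z : ℝ) : ∫ t in (0:ℝ)..z, ℓ (x + t) =
      (∫ t in (0:ℝ)..(x + z), ℓ t) - ∫ t in (0:ℝ)..x, ℓ t := by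
    rw [intervalIntegral.integral_comp_add_left, add_zero,
      intervalIntegral.integral_interval_sub_left (hℓ 0 _) (hℓ 0 _)]
  have hintegrand (z : ℝ) :
      w (x + z) * ℓ (x + z) * Real.exp (-∫ t in (0:ℝ)..z, ℓ (x + t)) =
        Real.exp (∫ t in (0:ℝ)..x, ℓ t) * (w (x + z) * arrivalDensity ℓ (x + z)) := by
    rw [hshift, arrivalDensity, neg_sub, sub_eq_add_neg, Real.exp_add]
    ring
  simp_rw [survivalAverage, hintegrand]
  rw [integral_const_mul, integral_Ioi_comp_add_left (fun v => w v * arrivalDensity ℓ v), add_zero]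

theorem integrableOn_Ioi_mul_arrivalDensity (hℓ : ∀ a b : ℝ, IntervalIntegrable ℓ volume a b)
    (hℓ0 : ∀ t, 0 ≤ ℓ t) (hw : Continuous w) {a C : ℝ} (hC : ∀ v ∈ Ioi a, |w v| ≤ C) :
    IntegrableOn (fun v => w v * arrivalDensity ℓ v) (Ioi a) :=
  (integrableOn_Ioi_arrivalDensity hℓ hℓ0 a).bdd_mul hw.aestronglyMeasurable
    ((ae_restrict_iff' measurableSet_Ioi).mpr (Eventually.of_forall hC))

theorem survivalAverage_le (hℓ : ∀ a b : ℝ, IntervalIntegrable ℓ volume a b)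
    (hℓ0 : ∀ t, 0 ≤ ℓ t) (hw : Continuous w) {y : ℝ} (hw0 : ∀ v ∈ Ioi y, 0 ≤ w v)
    (hwy : ∀ v ∈ Ioi y, w v ≤ w y) : survivalAverage w ℓ y ≤ w y := by
  have hwy0 : 0 ≤ w y := (hw0 (y + 1) (by simp)).trans (hwy (y + 1) (by simp))
  have hbound : ∫ v in Ioi y, w v * arrivalDensity ℓ v ≤
      w y * Real.exp (-∫ t in (0:ℝ)..y, ℓ t) := by
    calc ∫ v in Ioi y, w v * arrivalDensity ℓ v
        ≤ ∫ v in Ioi y, w y * arrivalDensity ℓ v :=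
          setIntegral_mono_on
            (integrableOn_Ioi_mul_arrivalDensity hℓ hℓ0 hw fun v hv => by
              rw [abs_of_nonneg (hw0 v hv)]; exact hwy v hv)
            ((integrableOn_Ioi_arrivalDensity hℓ hℓ0 y).const_mul _) measurableSet_Ioi
            fun v hv => mul_le_mul_of_nonneg_right (hwy v hv) (arrivalDensity_nonneg hℓ0 v)
      _ ≤ w y * Real.exp (-∫ t in (0:ℝ)..y, ℓ t) := by
          rw [integral_const_mul]
          exact mul_le_mul_of_nonneg_left (integral_Ioi_arrivalDensity_le hℓ hℓ0 y) hwy0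
  rw [survivalAverage_eq hℓ]
  calc Real.exp (∫ t in (0:ℝ)..y, ℓ t) * ∫ v in Ioi y, w v * arrivalDensity ℓ v
      ≤ Real.exp (∫ t in (0:ℝ)..y, ℓ t) * (w y * Real.exp (-∫ t in (0:ℝ)..y, ℓ t)) :=
        mul_le_mul_of_nonneg_left hbound (Real.exp_pos _).le
    _ = w y := by rw [mul_left_comm, ← Real.exp_add, add_neg_cancel, Real.exp_zero, mul_one]

theorem lt_intervalIntegral_mul_arrivalDensity (hℓ : ∀ a b : ℝ, IntervalIntegrable ℓ volume a b)
    (hℓpos : ∀ t, 0 < ℓ t) (hw : Continuous w) {x y : ℝ} (hxy : x < y)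
    (hwy : ∀ v ∈ Ioo x y, w y < w v) :
    w y * (Real.exp (-∫ t in (0:ℝ)..x, ℓ t) - Real.exp (-∫ t in (0:ℝ)..y, ℓ t)) <
      ∫ v in x..y, w v * arrivalDensity ℓ v := by
  have hint := intervalIntegrable_arrivalDensity hℓ x y
  have hwint := hint.continuousOn_mul hw.continuousOn
  have hpos : 0 < ∫ v in x..y, (w v * arrivalDensity ℓ v - w y * arrivalDensity ℓ v) :=
    intervalIntegral.intervalIntegral_pos_of_pos_on (hwint.sub (hint.const_mul (w y)))
      (fun v hv => by
        rw [← sub_mul]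
        exact mul_pos (sub_pos.mpr (hwy v hv)) (mul_pos (hℓpos v) (Real.exp_pos _)))
      hxy
  rw [intervalIntegral.integral_sub hwint (hint.const_mul (w y)),
    intervalIntegral.integral_const_mul, integral_arrivalDensity hℓ] at hpos
  linarith

theorem survivalAverage_eq_add (hℓ : ∀ a b : ℝ, IntervalIntegrable ℓ volume a b)
    (hw : Continuous w) {x y : ℝ}
    (htail : IntegrableOn (fun v => w v * arrivalDensity ℓ v) (Ioi y)) :
    survivalAverage w ℓ x =
      Real.exp (∫ t in (0:ℝ)..x, ℓ t) * (∫ v in x..y, w v * arrivalDensity ℓ v) +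
        Real.exp ((∫ t in (0:ℝ)..x, ℓ t) - ∫ t in (0:ℝ)..y, ℓ t) * survivalAverage w ℓ y := by
  rw [survivalAverage_eq hℓ x, survivalAverage_eq hℓ y,
    ← intervalIntegral.integral_interval_add_Ioi'
    ((intervalIntegrable_arrivalDensity hℓ x y).continuousOn_mul hw.continuousOn) htail,
    mul_add, Real.exp_sub]
  field_simp

theorem survivalAverage_strictAntiOn (hℓ : ∀ a b : ℝ, IntervalIntegrable ℓ volume a b)
    (hℓpos : ∀ t, 0 < ℓ t) (hw : Continuous w) {a : ℝ} (hw0 : ∀ v ∈ Ici a, 0 ≤ w v)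
    (hanti : StrictAntiOn w (Ici a)) : StrictAntiOn (survivalAverage w ℓ) (Ici a) := by
  intro x hx y hy hxy
  have hℓ0 (t : ℝ) : 0 ≤ ℓ t := (hℓpos t).le
  have hIci (v : ℝ) (hv : v ∈ Ioi y) : v ∈ Ici a := mem_Ici.mpr (le_trans hy hv.le)
  have hwy (v : ℝ) (hv : v ∈ Ioi y) : w v ≤ w y := (hanti hy (hIci v hv) hv).le
  have hfy := survivalAverage_le hℓ hℓ0 hw (fun v hv => hw0 v (hIci v hv)) hwy
  have hmid := lt_intervalIntegral_mul_arrivalDensity hℓ hℓpos hw hxy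
    fun v hv => hanti (mem_Ici.mpr (le_trans hx hv.1.le)) hy hv.2
  have htail := integrableOn_Ioi_mul_arrivalDensity hℓ hℓ0 hw fun v hv => by
    rw [abs_of_nonneg (hw0 v (hIci v hv))]; exact hwy v hv
  rw [survivalAverage_eq_add (x := x) hℓ hw htail]
  set Lx := ∫ t in (0:ℝ)..x, ℓ t
  set Ly := ∫ t in (0:ℝ)..y, ℓ t
  have hLxy : Lx < Ly := strictMono_intervalIntegral_of_pos hℓ hℓpos 0 hxy
  have hr : Real.exp (Lx - Ly) ≤ 1 := Real.exp_le_one_iff.mpr (by linarith)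
  have hmid' : w y * (1 - Real.exp (Lx - Ly)) <
      Real.exp Lx * ∫ v in x..y, w v * arrivalDensity ℓ v := by
    calc w y * (1 - Real.exp (Lx - Ly))
        = Real.exp Lx * (w y * (Real.exp (-Lx) - Real.exp (-Ly))) := by
          rw [Real.exp_sub, Real.exp_neg, Real.exp_neg]
          field_simp
      _ < _ := mul_lt_mul_of_pos_left hmid (Real.exp_pos _)
  linarith [mul_nonneg (sub_nonneg.mpr hr) (sub_nonneg.mpr hfy)]

end SurvivalAverage

theorem coalF_strictAnti_general
    (lam : ℝ) (hlam : lam < 0)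
    (μ : ℝ → ℝ) (hμpos : ∀ t, 0 < μ t)
    (hμint : ∀ a b : ℝ, IntervalIntegrable μ volume a b)
    (N : ℝ → ℝ) (hNpos : ∀ t, 0 < N t)
    (hNint : ∀ a b : ℝ, IntervalIntegrable (fun t => 1 / N t) volume a b) :
    StrictAntiOn (coalF lam μ N) (Set.Ici (0:ℝ)) := by
  have hs := strictMono_intervalIntegral_of_pos hμint hμpos 0
  have hw : StrictAnti fun v => Real.exp (2 * (∫ t in (0:ℝ)..v, μ t) * lam) := fun u v huv =>
    Real.exp_lt_exp.mpr (mul_lt_mul_of_neg_right (by linarith [hs huv]) hlam)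
  have hwc : Continuous fun v => Real.exp (2 * (∫ t in (0:ℝ)..v, μ t) * lam) :=
    Real.continuous_exp.comp
      ((continuous_const.mul (intervalIntegral.continuous_primitive hμint 0)).mul continuous_const)
  -- `coalF lam μ N` unfolds to `survivalAverage` with this weight and `ℓ = 1 / N`.
  exact survivalAverage_strictAntiOn hNint (fun t => one_div_pos.mpr (hNpos t)) hwc
    (fun v _ => (Real.exp_pos _).le) (hw.strictAntiOn _)

theorem coalF_strictAnti
    (lam : ℝ) (hlam : lam < 0)
    (μ : ℝ → ℝ) (hμpos : ∀ t, 0 < μ t)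
    (hμint : ∀ a b : ℝ, IntervalIntegrable μ volume a b)
    (N : ℝ → ℝ) (B : ℝ) (hNpos : ∀ t, 0 < N t) (hNB : ∀ t, N t ≤ B)
    (hNint : ∀ a b : ℝ, IntervalIntegrable (fun t => 1 / N t) volume a b) :
    StrictAntiOn (coalF lam μ N) (Set.Ici (0:ℝ)) :=
  coalF_strictAnti_general lam hlam μ hμpos hμint N hNpos hNint
end
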